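/- arXiv:1702.00600 — 2 statements merged into one kernel-verified Lean document; each statement's English description precedes it below -/
import Mathlib

section
/- Let u(x) = (1-x²) for |x| < 1 and u(x) = 0 for |x| ≥ 1, and let α = 1. Then for x ∈ (-1,1), the nonlocal operator L u(x) := ∫_{ℝ\{0}} [u(x+y) − u(x) − 1_{|y|<1}(y)·y·u'(x)] ν_{1,β}(dy) equals −2(C₁+C₂) − 2x[C₁ log(1−x) − C₂ log(1+x)], where ν_{1,β} has density (C₁·1_{y>0}+C₂·1_{y<0})/y² with respect to Lebesgue measure. -/
open MeasureTheory Set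

lemma rpow_neg_two_eq {y : ℝ} (hy0 : 0 < y) : y ^ (-2:ℝ) = (y ^ 2)⁻¹ := by
  rw [show (-2:ℝ) = ((-2:ℤ):ℝ) by norm_num, Real.rpow_intCast, zpow_neg]
  norm_num [zpow_ofNat]

lemma tailInt (k c : ℝ) (hc : 0 < c) :
    IntegrableOn (fun y : ℝ => k / y ^ 2) (Set.Ioi c) := by
  have h : IntegrableOn (fun y : ℝ => k * y ^ (-2:ℝ)) (Set.Ioi c) :=
    (integrableOn_Ioi_rpow_of_lt (by norm_num : (-2:ℝ) < -1) hc).const_mul k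
  refine h.congr_fun (fun y hy => ?_) measurableSet_Ioi
  simp only [rpow_neg_two_eq (hc.trans hy), div_eq_mul_inv]

lemma tailVal (k c : ℝ) (hc : 0 < c) :
    ∫ y in Set.Ioi c, k / y ^ 2 = k / c := by
  have heq : Set.EqOn (fun y : ℝ => k / y ^ 2) (fun y : ℝ => k * y ^ (-2:ℝ)) (Set.Ioi c) := by
    intro y hy
    simp only [rpow_neg_two_eq (hc.trans hy), div_eq_mul_inv]
  rw [setIntegral_congr_fun measurableSet_Ioi heq, integral_const_mul,
    integral_Ioi_rpow_of_lt (by norm_num) hc]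
  rw [show (-2:ℝ) + 1 = -1 by norm_num, Real.rpow_neg_one]
  field_simp

lemma aeIoo {f g : ℝ → ℝ} {p q : ℝ} (h : Set.EqOn f g (Set.Ioo p q)) :
    f =ᵐ[volume.restrict (Set.Ioc p q)] g := by
  rw [Filter.EventuallyEq, ae_restrict_iff' measurableSet_Ioc]
  have hq : (volume : Measure ℝ) {q} = 0 := measure_singleton q
  filter_upwards [compl_mem_ae_iff.mpr hq] with y hy hmem
  exact h ⟨hmem.1, lt_of_le_of_ne hmem.2 (by simpa using hy)⟩

lemma key (C x : ℝ) (hx1 : -1 < x) (hx2 : x < 1) :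
    IntegrableOn (fun y : ℝ =>
      (max (1 - (x + y) ^ 2) 0 - (1 - x ^ 2) - (if |y| < 1 then y * -(2 * x) else 0))
        * (C / y ^ 2)) (Set.Ioi 0) ∧
    ∫ y in Set.Ioi (0:ℝ),
      (max (1 - (x + y) ^ 2) 0 - (1 - x ^ 2) - (if |y| < 1 then y * -(2 * x) else 0))
        * (C / y ^ 2)
      = C * (-2 - 2 * x * Real.log (1 - x)) := by
  set f : ℝ → ℝ := fun y =>
    (max (1 - (x + y) ^ 2) 0 - (1 - x ^ 2) - (if |y| < 1 then y * -(2 * x) else 0))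
      * (C / y ^ 2) with hf
  have hx1' : (0:ℝ) < 1 - x := by linarith
  -- piece 1 : on (0, a] with a ≤ min (1-x) 1, f = -C
  have p1 : ∀ a : ℝ, 0 < a → a ≤ 1 - x → a ≤ 1 →
      IntegrableOn f (Set.Ioc 0 a) ∧ ∫ y in Set.Ioc (0:ℝ) a, f y = -C * a := by
    intro a ha0 ha1 ha2
    have heq : Set.EqOn f (fun _ => -C) (Set.Ioo 0 a) := by
      intro y hy
      obtain ⟨hy0, hya⟩ := hy
      have h1 : |y| < 1 := by rw [abs_of_pos hy0]; linarith
      have hmax : max (1 - (x + y) ^ 2) 0 = 1 - (x + y) ^ 2 := by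
        apply max_eq_left
        nlinarith [hy0, hya, hx1]
      have hnum : 1 - (x + y) ^ 2 - (1 - x ^ 2) - y * -(2 * x) = -y ^ 2 := by ring
      simp only [hf, if_pos h1, hmax, hnum]
      field_simp
    have hae := aeIoo heq
    constructor
    · exact ((integrableOn_const measure_Ioc_lt_top.ne)).congr hae.symm
    · rw [integral_congr_ae hae, setIntegral_const, Real.volume_real_Ioc_of_le ha0.le, smul_eq_mul]
      ring
  -- piece 3 : on (b, ∞) with b ≥ max (1-x) 1, f = (x²-1)C/y²
  have p3 : ∀ b : ℝ, 0 < b → 1 - x ≤ b → 1 ≤ b →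
      IntegrableOn f (Set.Ioi b) ∧ ∫ y in Set.Ioi b, f y = (x ^ 2 - 1) * C / b := by
    intro b hb0 hb1 hb2
    have heq : Set.EqOn f (fun y => (x ^ 2 - 1) * C / y ^ 2) (Set.Ioi b) := by
      intro y hy
      have hy' : b < y := hy
      have h1 : ¬ |y| < 1 := by
        rw [not_lt, abs_of_pos (hb0.trans hy')]; linarith
      have hmax : max (1 - (x + y) ^ 2) 0 = 0 := by
        apply max_eq_right
        nlinarith [hb1, hy']
      simp only [hf, hmax, if_neg h1]
      ring
    constructor
    · exact (tailInt ((x ^ 2 - 1) * C) b hb0).congr_fun heq.symm measurableSet_Ioi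
    · rw [setIntegral_congr_fun measurableSet_Ioi heq, tailVal _ _ hb0]
  rcases le_total x 0 with hx0 | hx0
  · -- x ≤ 0 : a = 1, b = 1 - x, middle on (1, 1-x]
    have h11 : (1:ℝ) ≤ 1 - x := by linarith
    set g2 : ℝ → ℝ := fun y => (-2 * x * y⁻¹ - 1) * C with hg2
    have heq2 : Set.EqOn f g2 (Set.Ioo 1 (1 - x)) := by
      intro y hy
      obtain ⟨hy1, hy2⟩ := hy
      have hy0 : (0:ℝ) < y := by linarith
      have h1 : ¬ |y| < 1 := by rw [not_lt, abs_of_pos hy0]; linarith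
      have hmax : max (1 - (x + y) ^ 2) 0 = 1 - (x + y) ^ 2 := by
        apply max_eq_left
        nlinarith [hy1, hy2, hx1]
      simp only [hf, hg2, hmax, if_neg h1]
      field_simp
      ring
    have hder : ∀ y ∈ Set.uIcc (1:ℝ) (1 - x),
        HasDerivAt (fun t => (-2 * x * Real.log t - t) * C) ((-2 * x * y⁻¹ - 1) * C) y := by
      intro y hy
      rw [Set.uIcc_of_le h11] at hy
      have hy0 : (0:ℝ) < y := lt_of_lt_of_le one_pos hy.1
      exact (((Real.hasDerivAt_log hy0.ne').const_mul (-2 * x)).sub (hasDerivAt_id y)).mul_const C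
    have hcont : ContinuousOn g2 (Set.uIcc (1:ℝ) (1 - x)) := by
      rw [Set.uIcc_of_le h11]
      have h0 : ∀ y ∈ Set.Icc (1:ℝ) (1 - x), y ≠ 0 := fun y hy => by
        have := hy.1; intro h; linarith
      exact ((continuousOn_const.mul (continuousOn_id.inv₀ h0)).sub continuousOn_const).mul
        continuousOn_const
    have hii : IntervalIntegrable g2 volume 1 (1 - x) := hcont.intervalIntegrable
    have hftc : ∫ y in (1:ℝ)..(1 - x), g2 y
        = (-2 * x * Real.log (1 - x) - (1 - x)) * C - (-2 * x * Real.log 1 - 1) * C :=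
      intervalIntegral.integral_eq_sub_of_hasDerivAt hder hii
    have hmidInt : IntegrableOn f (Set.Ioc 1 (1 - x)) :=
      hii.1.congr (aeIoo heq2).symm
    have hmidVal : ∫ y in Set.Ioc (1:ℝ) (1 - x), f y
        = (-2 * x * Real.log (1 - x) - (1 - x)) * C - (-2 * x * Real.log 1 - 1) * C := by
      rw [integral_congr_ae (aeIoo heq2), ← intervalIntegral.integral_of_le h11, hftc]
    obtain ⟨i1, v1⟩ := p1 1 one_pos h11 le_rfl
    obtain ⟨i3, v3⟩ := p3 (1 - x) hx1' le_rfl h11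
    have hsplit2 : Set.Ioc (1:ℝ) (1 - x) ∪ Set.Ioi (1 - x) = Set.Ioi 1 :=
      Set.Ioc_union_Ioi_eq_Ioi h11
    have hsplit1 : Set.Ioc (0:ℝ) 1 ∪ Set.Ioi 1 = Set.Ioi 0 :=
      Set.Ioc_union_Ioi_eq_Ioi zero_le_one
    have hd2 : Disjoint (Set.Ioc (1:ℝ) (1 - x)) (Set.Ioi (1 - x)) :=
      Set.disjoint_left.mpr fun y hy hy' => absurd hy.2 (not_le.mpr hy')
    have hd1 : Disjoint (Set.Ioc (0:ℝ) 1) (Set.Ioi 1) :=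
      Set.disjoint_left.mpr fun y hy hy' => absurd hy.2 (not_le.mpr hy')
    have iIoi1 : IntegrableOn f (Set.Ioi 1) := by
      rw [← hsplit2]; exact hmidInt.union i3
    constructor
    · rw [← hsplit1]; exact i1.union iIoi1
    · rw [← hsplit1, setIntegral_union hd1 measurableSet_Ioi i1 iIoi1, ← hsplit2,
        setIntegral_union hd2 measurableSet_Ioi hmidInt i3, v1, hmidVal, v3]
      rw [Real.log_one]
      have hne : (1:ℝ) - x ≠ 0 := ne_of_gt hx1'
      field_simp
      ring
  · -- 0 ≤ x : a = 1 - x, b = 1, middle on (1-x, 1]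
    have h11 : (1:ℝ) - x ≤ 1 := by linarith
    set g2 : ℝ → ℝ := fun y => ((1 - x ^ 2) * -(y ^ 2)⁻¹ + 2 * x * y⁻¹) * C with hg2
    have heq2 : Set.EqOn f g2 (Set.Ioo (1 - x) 1) := by
      intro y hy
      obtain ⟨hy1, hy2⟩ := hy
      have hy0 : (0:ℝ) < y := lt_trans hx1' hy1
      have h1 : |y| < 1 := by rw [abs_of_pos hy0]; linarith
      have hmax : max (1 - (x + y) ^ 2) 0 = 0 := by
        apply max_eq_right
        nlinarith [hy1, hy0]
      simp only [hf, hg2, hmax, if_pos h1]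
      field_simp
      ring
    have hder : ∀ y ∈ Set.uIcc (1 - x) (1:ℝ),
        HasDerivAt (fun t => ((1 - x ^ 2) * t⁻¹ + 2 * x * Real.log t) * C)
          (((1 - x ^ 2) * -(y ^ 2)⁻¹ + 2 * x * y⁻¹) * C) y := by
      intro y hy
      rw [Set.uIcc_of_le h11] at hy
      have hy0 : (0:ℝ) < y := lt_of_lt_of_le hx1' hy.1
      exact (((hasDerivAt_inv hy0.ne').const_mul (1 - x ^ 2)).add
        ((Real.hasDerivAt_log hy0.ne').const_mul (2 * x))).mul_const C
    have hcont : ContinuousOn g2 (Set.uIcc (1 - x) (1:ℝ)) := by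
      rw [Set.uIcc_of_le h11]
      have h0 : ∀ y ∈ Set.Icc (1 - x) (1:ℝ), y ≠ 0 := fun y hy =>
        (lt_of_lt_of_le hx1' hy.1).ne'
      have h0' : ∀ y ∈ Set.Icc (1 - x) (1:ℝ), y ^ 2 ≠ 0 := fun y hy =>
        pow_ne_zero 2 (h0 y hy)
      exact ((continuousOn_const.mul ((continuousOn_pow 2).inv₀ h0').neg).add
        (continuousOn_const.mul (continuousOn_id.inv₀ h0))).mul continuousOn_const
    have hii : IntervalIntegrable g2 volume (1 - x) 1 := hcont.intervalIntegrable
    have hftc : ∫ y in (1 - x)..(1:ℝ), g2 y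
        = ((1 - x ^ 2) * 1⁻¹ + 2 * x * Real.log 1) * C
          - ((1 - x ^ 2) * (1 - x)⁻¹ + 2 * x * Real.log (1 - x)) * C :=
      intervalIntegral.integral_eq_sub_of_hasDerivAt hder hii
    have hmidInt : IntegrableOn f (Set.Ioc (1 - x) 1) :=
      hii.1.congr (aeIoo heq2).symm
    have hmidVal : ∫ y in Set.Ioc (1 - x) (1:ℝ), f y
        = ((1 - x ^ 2) * 1⁻¹ + 2 * x * Real.log 1) * C
          - ((1 - x ^ 2) * (1 - x)⁻¹ + 2 * x * Real.log (1 - x)) * C := by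
      rw [integral_congr_ae (aeIoo heq2), ← intervalIntegral.integral_of_le h11, hftc]
    obtain ⟨i1, v1⟩ := p1 (1 - x) hx1' le_rfl h11
    obtain ⟨i3, v3⟩ := p3 1 one_pos h11 le_rfl
    have hsplit2 : Set.Ioc (1 - x) (1:ℝ) ∪ Set.Ioi 1 = Set.Ioi (1 - x) :=
      Set.Ioc_union_Ioi_eq_Ioi h11
    have hsplit1 : Set.Ioc (0:ℝ) (1 - x) ∪ Set.Ioi (1 - x) = Set.Ioi 0 :=
      Set.Ioc_union_Ioi_eq_Ioi hx1'.le
    have hd2 : Disjoint (Set.Ioc (1 - x) (1:ℝ)) (Set.Ioi 1) :=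
      Set.disjoint_left.mpr fun y hy hy' => absurd hy.2 (not_le.mpr hy')
    have hd1 : Disjoint (Set.Ioc (0:ℝ) (1 - x)) (Set.Ioi (1 - x)) :=
      Set.disjoint_left.mpr fun y hy hy' => absurd hy.2 (not_le.mpr hy')
    have iIoi1 : IntegrableOn f (Set.Ioi (1 - x)) := by
      rw [← hsplit2]; exact hmidInt.union i3
    constructor
    · rw [← hsplit1]; exact i1.union iIoi1
    · rw [← hsplit1, setIntegral_union hd1 measurableSet_Ioi i1 iIoi1, ← hsplit2,
        setIntegral_union hd2 measurableSet_Ioi hmidInt i3, v1, hmidVal, v3]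
      rw [Real.log_one]
      have hne : (1:ℝ) - x ≠ 0 := ne_of_gt hx1'
      field_simp
      ring

open MeasureTheory

/-- For `u(x) = (1-x²)₊` and `α = 1`, the compensated nonlocal operator applied to `u`,
with jump density `(C₁·1_{y>0} + C₂·1_{y<0})/y²`, equals
`−2(C₁+C₂) − 2x[C₁ log(1−x) − C₂ log(1+x)]` for `x ∈ (−1,1)`. -/
theorem stmt_7 (C₁ C₂ : ℝ) (hC₁ : 0 ≤ C₁) (hC₂ : 0 ≤ C₂)
    (u : ℝ → ℝ) (hu : ∀ x, u x = max (1 - x ^ 2) 0) :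
    ∀ x ∈ Set.Ioo (-1 : ℝ) 1,
      (∫ y in {(0:ℝ)}ᶜ,
          (u (x + y) - u x - (if |y| < 1 then y * deriv u x else 0)) *
            (((if 0 < y then C₁ else 0) + (if y < 0 then C₂ else 0)) / y ^ 2))
        = -2 * (C₁ + C₂) - 2 * x * (C₁ * Real.log (1 - x) - C₂ * Real.log (1 + x)) := by
  intro x hx
  obtain ⟨hx1, hx2⟩ := hx
  have hd : deriv u x = -(2 * x) := by
    have hev : u =ᶠ[nhds x] fun t => 1 - t ^ 2 := by
      filter_upwards [Ioo_mem_nhds hx1 hx2] with t ht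
      rw [hu t]
      exact max_eq_left (by nlinarith [ht.1, ht.2])
    rw [hev.deriv_eq]
    have h : HasDerivAt (fun t : ℝ => 1 - t ^ 2) (-(2 * x)) x := by
      simpa using (hasDerivAt_pow 2 x).const_sub 1
    exact h.deriv
  have hxx : max (1 - x ^ 2) 0 = 1 - x ^ 2 := max_eq_left (by nlinarith)
  have h1 := key C₁ x hx1 hx2
  have h2 := key C₂ (-x) (by linarith) (by linarith)
  simp only [hu, hd, hxx]
  rw [← Set.Iio_union_Ioi]
  set G : ℝ → ℝ := fun y =>
    (max (1 - (x + y) ^ 2) 0 - (1 - x ^ 2) - if |y| < 1 then y * -(2 * x) else 0) *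
      (((if 0 < y then C₁ else 0) + (if y < 0 then C₂ else 0)) / y ^ 2) with hG
  set fK₁ : ℝ → ℝ := fun y =>
    (max (1 - (x + y) ^ 2) 0 - (1 - x ^ 2) - if |y| < 1 then y * -(2 * x) else 0) *
      (C₁ / y ^ 2) with hfK₁
  set fK₂ : ℝ → ℝ := fun y =>
    (max (1 - (-x + y) ^ 2) 0 - (1 - (-x) ^ 2) - if |y| < 1 then y * -(2 * -x) else 0) *
      (C₂ / y ^ 2) with hfK₂
  have heqIoi : Set.EqOn fK₁ G (Set.Ioi 0) := by
    intro y hy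
    have hy' : (0:ℝ) < y := hy
    simp only [hfK₁, hG, if_pos hy', if_neg (asymm hy'), add_zero]
  have heqIio : Set.EqOn (fun y => fK₂ (-y)) G (Set.Iio 0) := by
    intro y hy
    have hy' : y < (0:ℝ) := hy
    simp only [hfK₂, hG, abs_neg, if_neg (asymm hy'), if_pos hy', zero_add]
    by_cases hab : |y| < 1
    · simp only [if_pos hab]
      ring
    · simp only [if_neg hab]
      ring
  have A : MeasurableEmbedding (fun t : ℝ => -t) :=
    (Homeomorph.neg ℝ).isClosedEmbedding.measurableEmbedding
  have hpre : (fun t : ℝ => -t) ⁻¹' (Set.Ioi 0) = Set.Iio 0 := by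
    ext t; simp [neg_pos]
  have hmap : Measure.map (fun t : ℝ => -t) (volume.restrict (Set.Iio 0))
      = volume.restrict (Set.Ioi 0) := by
    rw [← hpre, ← Measure.restrict_map A.measurable measurableSet_Ioi,
      Measure.map_neg_eq_self]
  have hIioInt : IntegrableOn (fun y : ℝ => fK₂ (-y)) (Set.Iio 0) := by
    have h := h2.1
    rw [show (Set.Ioi (0:ℝ)) = Set.Ioi 0 from rfl] at h
    have h' : Integrable fK₂ (Measure.map (fun t : ℝ => -t) (volume.restrict (Set.Iio 0))) := by
      rwa [hmap]
    exact A.integrable_map_iff.mp h'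
  have hIio : IntegrableOn G (Set.Iio 0) := hIioInt.congr_fun heqIio measurableSet_Iio
  have hIoi : IntegrableOn G (Set.Ioi 0) := h1.1.congr_fun heqIoi measurableSet_Ioi
  have hdisj : Disjoint (Set.Iio (0:ℝ)) (Set.Ioi 0) :=
    Set.disjoint_left.mpr fun y hy hy' => absurd (show y < 0 from hy) (not_lt.mpr (le_of_lt (show (0:ℝ) < y from hy')))
  rw [setIntegral_union hdisj measurableSet_Ioi hIio hIoi]
  have vIoi : ∫ y in Set.Ioi (0:ℝ), G y = C₁ * (-2 - 2 * x * Real.log (1 - x)) :=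
    (setIntegral_congr_fun measurableSet_Ioi heqIoi).symm.trans h1.2
  have vIio : ∫ y in Set.Iio (0:ℝ), G y = C₂ * (-2 - 2 * -x * Real.log (1 - -x)) := by
    rw [← setIntegral_congr_fun measurableSet_Iio heqIio,
      setIntegral_congr_set Iio_ae_eq_Iic, integral_comp_neg_Iic, neg_zero]
    exact h2.2
  rw [vIoi, vIio, show (1:ℝ) - -x = 1 + x by ring]
  ring
end

section
/- Let u(x) = (1-x²)_+ and α ∈ (0,2) with α ≠ 1. Then for x ∈ (-1,1), ∫_{ℝ\{0}} [u(x+y) − u(x) − 1_{|y|<1}(y)·y·u'(x)] ν_{α,β}(dy) = C₁[−(1−x)^{2−α}/(2−α) − 2x((1−x)^{1−α}−1)/(1−α) − (1+x)(1−x)^{1−α}/α] + C₂[−(1+x)^{2−α}/(2−α) − 2x(1−(1+x)^{1−α})/(1−α) − (1−x)(1+x)^{1−α}/α]. -/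
open MeasureTheory Set Real

noncomputable def Fker (x y : ℝ) : ℝ :=
  max (1 - (x + y) ^ 2) 0 - (1 - x ^ 2) - (if |y| < 1 then y * (-(2 * x)) else 0)

lemma ae_ne_one : ∀ᵐ y : ℝ ∂(volume : Measure ℝ), y ≠ (1:ℝ) := by
  rw [ae_iff]
  simp only [not_not]
  rw [show {y : ℝ | y = 1} = {(1:ℝ)} from Set.setOf_eq_eq_singleton]
  exact Real.volume_singleton

lemma my_integrableOn_congr {f g : ℝ → ℝ} {s : Set ℝ} (hs : MeasurableSet s)
    (hf : IntegrableOn f s volume) (h : ∀ y ∈ s, y ≠ 1 → f y = g y) :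
    IntegrableOn g s volume := by
  refine hf.congr ?_
  filter_upwards [ae_restrict_mem hs, ae_restrict_of_ae ae_ne_one] with y hy h1
  exact h y hy h1

lemma my_setIntegral_congr {f g : ℝ → ℝ} {s : Set ℝ} (hs : MeasurableSet s)
    (h : ∀ y ∈ s, y ≠ 1 → f y = g y) : ∫ y in s, f y = ∫ y in s, g y := by
  refine setIntegral_congr_ae hs ?_
  filter_upwards [ae_ne_one] with y h1 hy
  exact h y hy h1

/-- integral of `-(y^(1-α))` on `Ioc 0 m`. -/
lemma piece0 (m α : ℝ) (hm : 0 ≤ m) (hα0 : 0 < α) (hα2 : α < 2) :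
    IntegrableOn (fun y : ℝ => -(y ^ (1 - α))) (Ioc 0 m) volume ∧
    ∫ y in Ioc (0:ℝ) m, -(y ^ (1 - α)) = -(m ^ (2 - α) / (2 - α)) := by
  have hii : IntervalIntegrable (fun y : ℝ => y ^ (1 - α)) volume 0 m :=
    intervalIntegral.intervalIntegrable_rpow' (by linarith)
  constructor
  · exact ((intervalIntegrable_iff_integrableOn_Ioc_of_le hm).1 hii).neg
  · rw [← intervalIntegral.integral_of_le hm, intervalIntegral.integral_neg,
      integral_rpow (Or.inl (by linarith))]
    rw [show (1 - α + 1) = 2 - α by ring, Real.zero_rpow (by linarith), sub_zero]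

/-- integral of `A*y^p + B*y^q` on `Ioc c d`, `0 < c ≤ d`. -/
lemma piece_mid (A B p q c d : ℝ) (hc : 0 < c) (hcd : c ≤ d) (hp : p ≠ -1) (hq : q ≠ -1) :
    IntegrableOn (fun y : ℝ => A * y ^ p + B * y ^ q) (Ioc c d) volume ∧
    ∫ y in Ioc c d, (A * y ^ p + B * y ^ q)
      = A * ((d ^ (p + 1) - c ^ (p + 1)) / (p + 1))
        + B * ((d ^ (q + 1) - c ^ (q + 1)) / (q + 1)) := by
  have h0 : (0:ℝ) ∉ Set.uIcc c d := by
    rw [Set.uIcc_of_le hcd]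
    rintro ⟨h1, -⟩; linarith
  have ip : IntervalIntegrable (fun y : ℝ => y ^ p) volume c d :=
    intervalIntegral.intervalIntegrable_rpow (Or.inr h0)
  have iq : IntervalIntegrable (fun y : ℝ => y ^ q) volume c d :=
    intervalIntegral.intervalIntegrable_rpow (Or.inr h0)
  constructor
  · exact (intervalIntegrable_iff_integrableOn_Ioc_of_le hcd).1
      ((ip.const_mul A).add (iq.const_mul B))
  · rw [← intervalIntegral.integral_of_le hcd,
      intervalIntegral.integral_add (ip.const_mul A) (iq.const_mul B),
      intervalIntegral.integral_const_mul, intervalIntegral.integral_const_mul,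
      integral_rpow (Or.inr ⟨hp, h0⟩), integral_rpow (Or.inr ⟨hq, h0⟩)]

/-- integral of `A * y^(-(1+α))` on `Ioi c`, `0 < c`. -/
lemma piece_tail (A c α : ℝ) (hc : 0 < c) (hα0 : 0 < α) :
    IntegrableOn (fun y : ℝ => A * y ^ (-(1 + α))) (Ioi c) volume ∧
    ∫ y in Ioi c, A * y ^ (-(1 + α)) = A * (c ^ (-α) / α) := by
  have hlt : -(1 + α) < -1 := by linarith
  constructor
  · exact (integrableOn_Ioi_rpow_of_lt hlt hc).const_mul A
  · rw [integral_const_mul, integral_Ioi_rpow_of_lt hlt hc,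
      show -(1 + α) + 1 = -α by ring, neg_div, div_neg, neg_neg]

lemma rpow_inv_fact1 {y α : ℝ} (hy0 : 0 < y) : y * (y ^ (1 + α))⁻¹ = y ^ (-α) := by
  calc y * (y ^ (1 + α))⁻¹ = y ^ (1:ℝ) * y ^ (-(1 + α)) := by
        rw [Real.rpow_one, Real.rpow_neg hy0.le]
    _ = y ^ (1 + -(1 + α)) := (Real.rpow_add hy0 _ _).symm
    _ = y ^ (-α) := by congr 1; ring

lemma rpow_inv_fact2 {y α : ℝ} (hy0 : 0 < y) : y ^ 2 * (y ^ (1 + α))⁻¹ = y ^ (1 - α) := by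
  calc y ^ 2 * (y ^ (1 + α))⁻¹ = y ^ ((2:ℕ):ℝ) * y ^ (-(1 + α)) := by
        rw [Real.rpow_natCast, Real.rpow_neg hy0.le]
    _ = y ^ (((2:ℕ):ℝ) + -(1 + α)) := (Real.rpow_add hy0 _ _).symm
    _ = y ^ (1 - α) := by congr 1; push_cast; ring

lemma FF_low (x y α : ℝ) (hx : -1 < x) (hy0 : 0 < y) (hy1 : y < 1) (hya : y ≤ 1 - x) :
    Fker x y / y ^ (1 + α) = -(y ^ (1 - α)) := by
  have hmax : max (1 - (x + y) ^ 2) 0 = 1 - (x + y) ^ 2 := max_eq_left (by nlinarith)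
  have hite : |y| < 1 := by rw [abs_of_pos hy0]; exact hy1
  unfold Fker
  rw [hmax, if_pos hite, div_eq_mul_inv, ← rpow_inv_fact2 hy0]
  ring

lemma FF_midr (x y α : ℝ) (hy0 : 0 < y) (hy1 : y < 1) (hya : 1 - x < y) :
    Fker x y / y ^ (1 + α) = -(1 - x ^ 2) * y ^ (-(1 + α)) + 2 * x * y ^ (-α) := by
  have hmax : max (1 - (x + y) ^ 2) 0 = 0 := max_eq_right (by nlinarith)
  have hite : |y| < 1 := by rw [abs_of_pos hy0]; exact hy1
  unfold Fker
  rw [hmax, if_pos hite, div_eq_mul_inv, Real.rpow_neg hy0.le (1+α), ← rpow_inv_fact1 hy0]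
  ring

lemma FF_midl (x y α : ℝ) (hx : -1 < x) (hy1 : 1 < y) (hya : y ≤ 1 - x) :
    Fker x y / y ^ (1 + α) = -(2 * x) * y ^ (-α) + -(y ^ (1 - α)) := by
  have hy0 : (0:ℝ) < y := lt_trans one_pos hy1
  have hmax : max (1 - (x + y) ^ 2) 0 = 1 - (x + y) ^ 2 := max_eq_left (by nlinarith)
  have hite : ¬ |y| < 1 := by rw [abs_of_pos hy0]; linarith
  unfold Fker
  rw [hmax, if_neg hite, div_eq_mul_inv, ← rpow_inv_fact1 hy0, ← rpow_inv_fact2 hy0]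
  ring

lemma FF_tail (x y α : ℝ) (hy1 : 1 < y) (hya : 1 - x < y) :
    Fker x y / y ^ (1 + α) = -(1 - x ^ 2) * y ^ (-(1 + α)) := by
  have hy0 : (0:ℝ) < y := lt_trans one_pos hy1
  have hmax : max (1 - (x + y) ^ 2) 0 = 0 := max_eq_right (by nlinarith)
  have hite : ¬ |y| < 1 := by rw [abs_of_pos hy0]; linarith
  unfold Fker
  rw [hmax, if_neg hite, div_eq_mul_inv, Real.rpow_neg hy0.le]
  ring

lemma pos_side (α x : ℝ) (hα0 : 0 < α) (hα2 : α < 2) (hα1 : α ≠ 1)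
    (hx : -1 < x) (hx1 : x < 1) :
    IntegrableOn (fun y => Fker x y / y ^ (1 + α)) (Ioi (0:ℝ)) volume ∧
    ∫ y in Ioi (0:ℝ), Fker x y / y ^ (1 + α)
      = -(1 - x) ^ (2 - α) / (2 - α) - 2 * x * ((1 - x) ^ (1 - α) - 1) / (1 - α)
        - (1 + x) * (1 - x) ^ (1 - α) / α := by
  have hp : -(1 + α) ≠ -1 := by intro h; apply hα0.ne'; linarith
  have hq : -α ≠ -1 := by intro h; apply hα1; linarith
  have h1α : (1:ℝ) - α ≠ 0 := sub_ne_zero.mpr (fun h => hα1 h.symm)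
  have h2α : (2:ℝ) - α ≠ 0 := ne_of_gt (by linarith)
  obtain ⟨a, ha⟩ : ∃ a : ℝ, a = 1 - x := ⟨_, rfl⟩
  rw [← ha]
  have ha0 : 0 < a := by rw [ha]; linarith
  have hP1 : a ^ (1 - α) = a * a ^ (-α) := by
    rw [show (1:ℝ) - α = 1 + -α by ring, Real.rpow_add ha0, Real.rpow_one]
  have hP2 : a ^ (2 - α) = a ^ 2 * a ^ (-α) := by
    rw [show (2:ℝ) - α = 1 + (1 - α) by ring, Real.rpow_add ha0, Real.rpow_one, hP1]; ring
  rcases le_total a 1 with hle | hle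
  · -- a ≤ 1  (x ≥ 0)
    have hu1 : Ioc (0:ℝ) a ∪ Ioc a 1 = Ioc 0 1 := Ioc_union_Ioc_eq_Ioc ha0.le hle
    have hu2 : Ioc (0:ℝ) 1 ∪ Ioi 1 = Ioi 0 := Ioc_union_Ioi_eq_Ioi zero_le_one
    obtain ⟨i1, v1⟩ := piece0 a α ha0.le hα0 hα2
    obtain ⟨i2, v2⟩ := piece_mid (-(1 - x ^ 2)) (2 * x) (-(1 + α)) (-α) a 1 ha0 hle hp hq
    obtain ⟨i3, v3⟩ := piece_tail (-(1 - x ^ 2)) 1 α one_pos hα0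
    have e1 : ∀ y ∈ Ioc (0:ℝ) a, y ≠ 1 → -(y ^ (1 - α)) = Fker x y / y ^ (1 + α) := by
      intro y hy h1
      exact (FF_low x y α hx hy.1 (lt_of_le_of_ne (hy.2.trans hle) h1)
        (by rw [← ha]; exact hy.2)).symm
    have e2 : ∀ y ∈ Ioc a 1, y ≠ 1 →
        -(1 - x ^ 2) * y ^ (-(1 + α)) + 2 * x * y ^ (-α) = Fker x y / y ^ (1 + α) :=
      fun y hy h1 =>
        (FF_midr x y α (ha0.trans hy.1) (lt_of_le_of_ne hy.2 h1) (by rw [← ha]; exact hy.1)).symm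
    have e3 : ∀ y ∈ Ioi (1:ℝ), y ≠ 1 → -(1 - x ^ 2) * y ^ (-(1 + α)) = Fker x y / y ^ (1 + α) :=
      fun y hy _ => (FF_tail x y α hy (by rw [← ha]; exact lt_of_le_of_lt hle hy)).symm
    have J1 := my_integrableOn_congr measurableSet_Ioc i1 e1
    have J2 := my_integrableOn_congr measurableSet_Ioc i2 e2
    have J3 := my_integrableOn_congr measurableSet_Ioi i3 e3
    have V : ∫ y in Ioi (0:ℝ), Fker x y / y ^ (1 + α)
        = (∫ y in Ioc (0:ℝ) a, Fker x y / y ^ (1 + α))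
          + (∫ y in Ioc a 1, Fker x y / y ^ (1 + α))
          + (∫ y in Ioi (1:ℝ), Fker x y / y ^ (1 + α)) := by
      rw [← hu2, setIntegral_union (Ioc_disjoint_Ioi le_rfl) measurableSet_Ioi
        (by rw [← hu1]; exact J1.union J2) J3, ← hu1,
        setIntegral_union (Ioc_disjoint_Ioc_of_le le_rfl) measurableSet_Ioc J1 J2]
    refine ⟨by rw [← hu2, ← hu1]; exact (J1.union J2).union J3, ?_⟩
    rw [V, ← my_setIntegral_congr measurableSet_Ioc e1, ← my_setIntegral_congr measurableSet_Ioc e2,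
      ← my_setIntegral_congr measurableSet_Ioi e3, v1, v2, v3]
    rw [show -(1 + α) + 1 = -α by ring, show -α + 1 = 1 - α by ring]
    simp only [Real.one_rpow]
    have hxa : x = 1 - a := by rw [ha]; ring
    rw [hP1, hP2, hxa]; field_simp [hα0.ne', h1α, h2α]; ring
  · -- 1 ≤ a  (x ≤ 0)
    have hu1 : Ioc (0:ℝ) 1 ∪ Ioc 1 a = Ioc 0 a := Ioc_union_Ioc_eq_Ioc zero_le_one hle
    have hu2 : Ioc (0:ℝ) a ∪ Ioi a = Ioi 0 := Ioc_union_Ioi_eq_Ioi ha0.le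
    obtain ⟨i1, v1⟩ := piece0 1 α zero_le_one hα0 hα2
    obtain ⟨i2, v2⟩ := piece_mid (-(2 * x)) (-1) (-α) (1 - α) 1 a one_pos hle hq
      (by intro h; apply h2α; linarith)
    obtain ⟨i3, v3⟩ := piece_tail (-(1 - x ^ 2)) a α ha0 hα0
    have e1 : ∀ y ∈ Ioc (0:ℝ) 1, y ≠ 1 → -(y ^ (1 - α)) = Fker x y / y ^ (1 + α) :=
      fun y hy h1 => (FF_low x y α hx hy.1 (lt_of_le_of_ne hy.2 h1)
        (by rw [← ha]; exact hy.2.trans hle)).symm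
    have e2 : ∀ y ∈ Ioc (1:ℝ) a, y ≠ 1 →
        -(2 * x) * y ^ (-α) + -1 * y ^ (1 - α) = Fker x y / y ^ (1 + α) := by
      intro y hy _
      rw [show (-1 : ℝ) * y ^ (1 - α) = -(y ^ (1 - α)) by ring]
      exact (FF_midl x y α hx hy.1 (by rw [← ha]; exact hy.2)).symm
    have e3 : ∀ y ∈ Ioi a, y ≠ 1 → -(1 - x ^ 2) * y ^ (-(1 + α)) = Fker x y / y ^ (1 + α) :=
      fun y hy _ => (FF_tail x y α (lt_of_le_of_lt hle hy) (by rw [← ha]; exact hy)).symm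
    have J1 := my_integrableOn_congr measurableSet_Ioc i1 e1
    have J2 := my_integrableOn_congr measurableSet_Ioc i2 e2
    have J3 := my_integrableOn_congr measurableSet_Ioi i3 e3
    have V : ∫ y in Ioi (0:ℝ), Fker x y / y ^ (1 + α)
        = (∫ y in Ioc (0:ℝ) 1, Fker x y / y ^ (1 + α))
          + (∫ y in Ioc (1:ℝ) a, Fker x y / y ^ (1 + α))
          + (∫ y in Ioi a, Fker x y / y ^ (1 + α)) := by
      rw [← hu2, setIntegral_union (Ioc_disjoint_Ioi le_rfl) measurableSet_Ioi
        (by rw [← hu1]; exact J1.union J2) J3, ← hu1,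
        setIntegral_union (Ioc_disjoint_Ioc_of_le le_rfl) measurableSet_Ioc J1 J2]
    refine ⟨by rw [← hu2, ← hu1]; exact (J1.union J2).union J3, ?_⟩
    rw [V, ← my_setIntegral_congr measurableSet_Ioc e1, ← my_setIntegral_congr measurableSet_Ioc e2,
      ← my_setIntegral_congr measurableSet_Ioi e3, v1, v2, v3]
    rw [show -α + 1 = 1 - α by ring, show (1:ℝ) - α + 1 = 2 - α by ring]
    simp only [Real.one_rpow]
    have hxa : x = 1 - a := by rw [ha]; ring
    rw [hP1, hP2, hxa]; field_simp [hα0.ne', h1α, h2α]; ring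


lemma Fker_neg (x y : ℝ) : Fker (-x) (-y) = Fker x y := by
  unfold Fker
  rw [abs_neg, show (-x + -y) ^ 2 = (x + y) ^ 2 by ring, show (-x) ^ 2 = x ^ 2 by ring,
    show (-y) * (-(2 * -x)) = y * (-(2 * x)) by ring]

/-- For `u(x) = (1-x²)₊` and `α ∈ (0,2)`, `α ≠ 1`, the compensated nonlocal operator applied
to `u`, with jump density `(C₁·1_{y>0} + C₂·1_{y<0})/|y|^{1+α}`, has the explicit value below
for `x ∈ (−1,1)`. -/
theorem stmt_8 (α C₁ C₂ : ℝ) (hα : α ∈ Set.Ioo (0:ℝ) 2) (hα1 : α ≠ 1)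
    (hC₁ : 0 ≤ C₁) (hC₂ : 0 ≤ C₂)
    (u : ℝ → ℝ) (hu : ∀ x, u x = max (1 - x ^ 2) 0) :
    ∀ x ∈ Set.Ioo (-1 : ℝ) 1,
      (∫ y in {(0:ℝ)}ᶜ,
          (u (x + y) - u x - (if |y| < 1 then y * deriv u x else 0)) *
            (((if 0 < y then C₁ else 0) + (if y < 0 then C₂ else 0)) / |y| ^ (1 + α)))
        = C₁ * (-(1 - x) ^ (2 - α) / (2 - α) - 2 * x * ((1 - x) ^ (1 - α) - 1) / (1 - α)
              - (1 + x) * (1 - x) ^ (1 - α) / α)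
          + C₂ * (-(1 + x) ^ (2 - α) / (2 - α) - 2 * x * (1 - (1 + x) ^ (1 - α)) / (1 - α)
              - (1 - x) * (1 + x) ^ (1 - α) / α) := by
  obtain ⟨hα0, hα2⟩ := hα
  intro x hx
  obtain ⟨hx1, hx2⟩ := hx
  have hux : u x = 1 - x ^ 2 := by rw [hu]; exact max_eq_left (by nlinarith)
  have hderiv : deriv u x = -(2 * x) := by
    have hev : u =ᶠ[nhds x] fun t => 1 - t ^ 2 := by
      filter_upwards [isOpen_Ioo.mem_nhds (show x ∈ Ioo (-1:ℝ) 1 from ⟨hx1, hx2⟩)] with t ht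
      rw [hu t]
      exact max_eq_left (by nlinarith [ht.1, ht.2])
    rw [hev.deriv_eq]
    have hd : HasDerivAt (fun t : ℝ => 1 - t ^ 2) (-(2 * x)) x := by
      simpa using (hasDerivAt_pow 2 x).const_sub 1
    exact hd.deriv
  have hrw : ∀ y : ℝ, (u (x + y) - u x - (if |y| < 1 then y * deriv u x else 0)) = Fker x y := by
    intro y
    rw [hu, hux, hderiv]
    rfl
  simp only [hrw]
  -- positive side
  have hpos := pos_side α x hα0 hα2 hα1 hx1 hx2
  have hneg := pos_side α (-x) hα0 hα2 hα1 (by linarith) (by linarith)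
  set G : ℝ → ℝ := fun y =>
    Fker x y * (((if 0 < y then C₁ else 0) + (if y < 0 then C₂ else 0)) / |y| ^ (1 + α)) with hG
  set H : ℝ → ℝ := fun y => C₂ * (Fker (-x) y / y ^ (1 + α)) with hH
  have eqpos : EqOn G (fun y => C₁ * (Fker x y / y ^ (1 + α))) (Ioi 0) := by
    intro y hy
    have hy' : (0:ℝ) < y := hy
    simp only [hG, if_pos hy', if_neg (not_lt.2 (le_of_lt hy')), abs_of_pos hy']
    ring
  have eqneg : EqOn G (fun y => H (-y)) (Iio 0) := by
    intro y hy
    have hy' : y < (0:ℝ) := hy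
    simp only [hG, hH, if_neg (not_lt.2 (le_of_lt hy')), if_pos hy', abs_of_neg hy', Fker_neg]
    ring
  have Ipos : IntegrableOn G (Ioi 0) volume :=
    IntegrableOn.congr_fun (hpos.1.const_mul C₁) eqpos.symm measurableSet_Ioi
  have Ineg : IntegrableOn G (Iio 0) volume := by
    have h1 : IntegrableOn (fun y => H (-y)) (Iio 0) volume := by
      have h2 := ((Measure.measurePreserving_neg (volume : Measure ℝ)).integrableOn_comp_preimage
        (Homeomorph.neg ℝ).measurableEmbedding).2 (hneg.1.const_mul C₂)
      simpa [Function.comp_def] using h2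
    exact IntegrableOn.congr_fun h1 eqneg.symm measurableSet_Iio
  have hsplit : ∫ y in {(0:ℝ)}ᶜ, G y = (∫ y in Iio (0:ℝ), G y) + ∫ y in Ioi (0:ℝ), G y := by
    rw [← Set.Iio_union_Ioi,
      setIntegral_union ((Set.Iio_disjoint_Ici (le_refl (0:ℝ))).mono_right Set.Ioi_subset_Ici_self) measurableSet_Ioi Ineg Ipos]
  have vpos : ∫ y in Ioi (0:ℝ), G y
      = C₁ * (-(1 - x) ^ (2 - α) / (2 - α) - 2 * x * ((1 - x) ^ (1 - α) - 1) / (1 - α)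
          - (1 + x) * (1 - x) ^ (1 - α) / α) := by
    rw [setIntegral_congr_fun measurableSet_Ioi eqpos, integral_const_mul, hpos.2]
  have vneg : ∫ y in Iio (0:ℝ), G y
      = C₂ * (-(1 + x) ^ (2 - α) / (2 - α) - 2 * x * (1 - (1 + x) ^ (1 - α)) / (1 - α)
          - (1 - x) * (1 + x) ^ (1 - α) / α) := by
    rw [setIntegral_congr_fun measurableSet_Iio eqneg, ← integral_Iic_eq_integral_Iio,
      integral_comp_neg_Iic (0:ℝ) H, neg_zero]
    simp only [hH]
    rw [integral_const_mul, hneg.2,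
      show (1:ℝ) - -x = 1 + x by ring, show (1:ℝ) + -x = 1 - x by ring]
    ring
  rw [hsplit, vpos, vneg]
  ring
end
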